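/- arXiv:1508.03660 — 2 statements merged into one kernel-verified Lean document; each statement's English description precedes it below -/
import Mathlib

section
/- Let each of n vertices independently choose r(v) = j with probability 2^{-j} for j ≥ 1, let j_max = max_v r(v) and MAX = {v : r(v) = j_max}. Then P(|MAX| > 2·log₂ n) ≤ 2^{-2·log₂ n} = 1/n². -/
/-! With `superlevel ω i` the set of vertices at level at least `i`, the event `|MAX| ≥ k` is
covered by the events `A i`: at least `k` vertices reach level `i` and none reaches `i + 1`.
Given `superlevel ω i = S`, memorylessness of the geometric law makes `superlevel ω (i + 1)` a
uniformly random subset of `S`; since `|S| ≥ k`, at least `2 ^ k - 1` of these subsets have fewer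
than `k` elements, so `(2 ^ k - 1) P(A i) ≤ P(B i)`, where `B i` says that `i` is the `k`-th
largest level. The `B i` are disjoint, hence `P(|MAX| ≥ k) ≤ 1 / (2 ^ k - 1)`, and
`k = ⌊2 log₂ n⌋ + 1` gives `2 ^ k - 1 ≥ n ^ 2`. -/

open MeasureTheory ProbabilityTheory

noncomputable def geomHalf : Measure ℕ :=
  (ProbabilityTheory.geometricPMF (p := 1 / 2) (by norm_num) (by norm_num)).toMeasure

open Finset
open scoped ENNReal

instance : IsProbabilityMeasure geomHalf := PMF.toMeasure.isProbabilityMeasure _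

lemma geomHalf_singleton (i : ℕ) : geomHalf {i} = 2⁻¹ ^ (i + 1) := by
  rw [geomHalf, PMF.toMeasure_apply_singleton _ _ (measurableSet_singleton i)]
  change ENNReal.ofReal ((1 - 1 / 2 : ℝ) ^ i * (1 / 2)) = _
  rw [show (1 - 1 / 2 : ℝ) = 2⁻¹ by norm_num, one_div, ← pow_succ,
    ENNReal.ofReal_pow (by norm_num), ENNReal.ofReal_inv_of_pos two_pos, ENNReal.ofReal_ofNat]

lemma geomHalf_Ici (i : ℕ) : geomHalf (Set.Ici i) = 2⁻¹ ^ i := by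
  induction i with
  | zero => simp
  | succ i ih =>
    have hsplit : geomHalf (Set.Ici i) = geomHalf {i} + geomHalf (Set.Ici (i + 1)) := by
      rw [← measure_union (by simp) measurableSet_Ici]
      congr 1
      ext m
      simp only [Set.mem_Ici, Set.mem_union, Set.mem_singleton_iff]
      omega
    rw [ih, geomHalf_singleton, ← ENNReal.add_halves (2⁻¹ ^ i), div_eq_mul_inv, ← pow_succ]
      at hsplit
    exact ((ENNReal.add_right_inj (by simp)).1 hsplit).symm

lemma geomHalf_Ici_succ (i : ℕ) : geomHalf (Set.Ici (i + 1)) = geomHalf {i} := by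
  rw [geomHalf_Ici, geomHalf_singleton]

lemma measure_setOf_mem_and_eq_sum {Ω β : Type*} [MeasurableSpace Ω] [DiscreteMeasurableSpace Ω]
    (ν : Measure Ω) (f : Ω → β) (P : Finset β) (q : Ω → Prop) :
    ν {ω | f ω ∈ P ∧ q ω} = ∑ b ∈ P, ν {ω | f ω = b ∧ q ω} := by
  classical
  rw [← measure_biUnion_finset _ fun _ _ => .of_discrete]
  · congr 1
    ext ω
    simp
  · exact fun b _ b' _ hbb' => Set.disjoint_left.2 fun ω h h' => hbb' (h.1.symm.trans h'.1)

section Superlevel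

variable {V : Type*} [Fintype V]

def superlevel (ω : V → ℕ) (i : ℕ) : Finset V := {v | i ≤ ω v}

lemma superlevel_antitone (ω : V → ℕ) : Antitone (superlevel ω) :=
  fun _ _ hij => monotone_filter_right _ fun _ _ h => hij.trans h

lemma superlevel_sup_succ (ω : V → ℕ) : superlevel ω (univ.sup ω + 1) = ∅ :=
  filter_eq_empty_iff.2 fun v _ => by
    have : ω v ≤ univ.sup ω := le_sup (mem_univ v)
    omega

lemma filter_add_one_eq_sup_eq_superlevel (ω : V → ℕ) :
    ({v | ω v + 1 = univ.sup fun u => ω u + 1} : Finset V) = superlevel ω (univ.sup ω) := by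
  ext v
  have hsup : (univ.sup fun u => ω u + 1) = univ.sup ω + 1 :=
    (apply_sup_eq_sup_comp_of_nonempty (g := (· + 1)) (fun _ _ h => Nat.succ_le_succ h)
      ⟨v, mem_univ v⟩).symm
  have hle : ω v ≤ univ.sup ω := le_sup (mem_univ v)
  simp only [superlevel, mem_filter, mem_univ, true_and, hsup]
  omega

lemma setOf_superlevel_eq_pi [DecidableEq V] (i : ℕ) {S T : Finset V} (hTS : T ⊆ S) :
    {ω : V → ℕ | superlevel ω i = S ∧ superlevel ω (i + 1) = T} =
      Set.univ.pi fun v =>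
        if v ∈ T then Set.Ici (i + 1) else if v ∈ S then {i} else Set.Iio i := by
  ext ω
  simp only [Set.mem_setOf_eq, Finset.ext_iff, superlevel, mem_filter, mem_univ, true_and,
    Set.mem_pi, Set.mem_univ, forall_const, ← forall_and]
  refine forall_congr' fun v => ?_
  by_cases hT : v ∈ T
  · simpa [hT, hTS hT] using le_of_lt
  · by_cases hS : v ∈ S <;> simp [hT, hS] <;> omega

local notation "μ" => Measure.pi fun _ : V => geomHalf

lemma measure_superlevel_eq_of_subset [DecidableEq V] (i : ℕ) {S T : Finset V} (hTS : T ⊆ S) :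
    μ {ω | superlevel ω i = S ∧ superlevel ω (i + 1) = T} =
      μ {ω | superlevel ω i = S ∧ superlevel ω (i + 1) = ∅} := by
  rw [setOf_superlevel_eq_pi i hTS, setOf_superlevel_eq_pi i (empty_subset S),
    Measure.pi_pi, Measure.pi_pi]
  refine prod_congr rfl fun v _ => ?_
  by_cases hT : v ∈ T
  · simp [hT, hTS hT, geomHalf_Ici_succ]
  · simp [hT]

lemma two_pow_sub_one_mul_measure_superlevel_le (i k : ℕ) {S : Finset V} (hk : k ≤ #S) :
    (2 ^ k - 1) * μ {ω | superlevel ω i = S ∧ superlevel ω (i + 1) = ∅} ≤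
      μ {ω | superlevel ω i = S ∧ #(superlevel ω (i + 1)) < k} := by
  classical
  obtain ⟨S₀, hS₀S, hS₀⟩ := exists_subset_card_eq hk
  set F := S₀.powerset.erase S₀
  calc (2 ^ k - 1) * μ {ω | superlevel ω i = S ∧ superlevel ω (i + 1) = ∅}
      = ∑ T ∈ F, μ {ω | superlevel ω i = S ∧ superlevel ω (i + 1) = T} := by
        rw [sum_congr rfl fun T hT => measure_superlevel_eq_of_subset i
            ((mem_powerset.1 (mem_of_mem_erase hT)).trans hS₀S),
          sum_const, card_erase_of_mem (mem_powerset_self S₀), card_powerset, hS₀, nsmul_eq_mul,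
          ENNReal.natCast_sub]
        norm_num
    _ = μ (⋃ T ∈ F, {ω | superlevel ω i = S ∧ superlevel ω (i + 1) = T}) :=
        (measure_biUnion_finset (fun T _ T' _ hTT' => Set.disjoint_left.2 fun ω h h' =>
          hTT' (h.2.symm.trans h'.2)) fun _ _ => .of_discrete).symm
    _ ≤ μ {ω | superlevel ω i = S ∧ #(superlevel ω (i + 1)) < k} := by
        refine measure_mono fun ω hω => ?_
        obtain ⟨T, hT, hωS, hωT⟩ := Set.mem_iUnion₂.1 hω
        obtain ⟨hTS₀, hTsub⟩ := mem_erase.1 hT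
        exact ⟨hωS, hωT ▸ hS₀ ▸
          card_lt_card (ssubset_of_subset_of_ne (mem_powerset.1 hTsub) hTS₀)⟩

lemma two_pow_sub_one_mul_measure_top_level_le (i k : ℕ) :
    (2 ^ k - 1) * μ {ω | k ≤ #(superlevel ω i) ∧ superlevel ω (i + 1) = ∅} ≤
      μ {ω | k ≤ #(superlevel ω i) ∧ #(superlevel ω (i + 1)) < k} := by
  set P : Finset (Finset V) := {S | k ≤ #S}
  have hP (S : Finset V) : k ≤ #S ↔ S ∈ P := by simp [P]
  simp only [hP, measure_setOf_mem_and_eq_sum, mul_sum]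
  exact sum_le_sum fun S hS => two_pow_sub_one_mul_measure_superlevel_le i k ((hP S).2 hS)

lemma pairwise_disjoint_superlevel_card_crosses (k : ℕ) :
    Pairwise (Function.onFun Disjoint fun i =>
      {ω : V → ℕ | k ≤ #(superlevel ω i) ∧ #(superlevel ω (i + 1)) < k}) := by
  refine pairwise_disjoint_on _ |>.2 fun i j hij => Set.disjoint_left.2 fun ω hi hj => ?_
  have := card_le_card (superlevel_antitone ω (Nat.succ_le_of_lt hij))
  exact absurd (hj.1.trans this) (not_le.2 hi.2)

theorem measure_le_card_superlevel_sup_le (k : ℕ) :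
    μ {ω | k ≤ #(superlevel ω (univ.sup ω))} ≤ (2 ^ k - 1)⁻¹ := by
  set A := fun i => {ω : V → ℕ | k ≤ #(superlevel ω i) ∧ superlevel ω (i + 1) = ∅}
  set B := fun i => {ω : V → ℕ | k ≤ #(superlevel ω i) ∧ #(superlevel ω (i + 1)) < k}
  have hcover : {ω | k ≤ #(superlevel ω (univ.sup ω))} ⊆ ⋃ i, A i :=
    fun ω hω => Set.mem_iUnion.2 ⟨univ.sup ω, hω, superlevel_sup_succ ω⟩
  have hB : ∑' i, μ (B i) ≤ 1 := by
    rw [← measure_iUnion (pairwise_disjoint_superlevel_card_crosses k) fun _ => .of_discrete]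
    exact prob_le_one
  rw [ENNReal.le_inv_iff_mul_le, mul_comm]
  calc (2 ^ k - 1) * μ {ω | k ≤ #(superlevel ω (univ.sup ω))}
      ≤ (2 ^ k - 1) * ∑' i, μ (A i) := by
        gcongr
        exact (measure_mono hcover).trans (measure_iUnion_le A)
    _ = ∑' i, (2 ^ k - 1) * μ (A i) := ENNReal.tsum_mul_left.symm
    _ ≤ ∑' i, μ (B i) :=
        ENNReal.tsum_le_tsum fun i => two_pow_sub_one_mul_measure_top_level_le i k
    _ ≤ 1 := hB

end Superlevel

lemma two_rpow_two_mul_logb {x : ℝ} (hx : 0 < x) : (2 : ℝ) ^ (2 * Real.logb 2 x) = x ^ 2 := by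
  rw [mul_comm, Real.rpow_mul zero_le_two, Real.rpow_logb two_pos (by norm_num) hx, Real.rpow_two]

theorem max_level_set_small_general (V : Type*) [Fintype V] (n : ℕ) (hn2 : 2 ≤ n) :
    (Measure.pi fun _ : V => geomHalf)
      {ω | 2 * Real.logb 2 n <
        ((Finset.univ.filter
          (fun v : V => ω v + 1 = Finset.univ.sup (fun u : V => ω u + 1))).card : ℝ)}
      ≤ ENNReal.ofReal ((2 : ℝ) ^ (-(2 * Real.logb 2 n))) ∧
    ENNReal.ofReal ((2 : ℝ) ^ (-(2 * Real.logb 2 n))) = 1 / (n : ENNReal) ^ 2 := by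
  set t := 2 * Real.logb 2 n
  have hn0 : (0 : ℝ) < n := by positivity
  have ht : 0 ≤ t :=
    mul_nonneg zero_le_two (Real.logb_nonneg one_lt_two (by exact_mod_cast by omega))
  have hbound : ENNReal.ofReal ((2 : ℝ) ^ (-t)) = 1 / (n : ℝ≥0∞) ^ 2 := by
    rw [Real.rpow_neg zero_le_two, two_rpow_two_mul_logb hn0,
      ENNReal.ofReal_inv_of_pos (by positivity), ENNReal.ofReal_pow hn0.le,
      ENNReal.ofReal_natCast, one_div]
  refine ⟨?_, hbound⟩
  set k := ⌊t⌋₊ + 1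
  have hnk : n ^ 2 < 2 ^ k := by
    have : (n : ℝ) ^ 2 < (2 : ℝ) ^ (k : ℝ) := by
      rw [← two_rpow_two_mul_logb hn0]
      exact Real.rpow_lt_rpow_of_exponent_lt one_lt_two (by simpa [k] using Nat.lt_floor_add_one t)
    exact_mod_cast this
  calc _ ≤ (Measure.pi fun _ : V => geomHalf) {ω | k ≤ #(superlevel ω (univ.sup ω))} := by
        refine measure_mono fun ω (hω : t < _) => ?_
        rw [filter_add_one_eq_sup_eq_superlevel] at hω
        exact (Nat.floor_lt ht).2 hω
    _ ≤ ((2 : ℝ≥0∞) ^ k - 1)⁻¹ := measure_le_card_superlevel_sup_le k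
    _ ≤ 1 / (n : ℝ≥0∞) ^ 2 := by
        rw [one_div, ENNReal.inv_le_inv]
        exact_mod_cast (by omega : n ^ 2 ≤ 2 ^ k - 1)
    _ = _ := hbound.symm

/-- Each of `n` vertices independently chooses `r(v) = j` with
probability `2^{-j}` (`j ≥ 1`, realized as `ω v + 1` with `ω v` geometric of
parameter `1/2`).  Let `j_max` be the maximum level and `MAX` the set of vertices
attaining it.  Then `P(|MAX| > 2·log₂ n) ≤ 2^{-2·log₂ n} = 1/n²`. -/
theorem max_level_set_small (V : Type*) [Fintype V] [Nonempty V] (n : ℕ)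
    (hn : n = Fintype.card V) (hn2 : 2 ≤ n) :
    (Measure.pi fun _ : V => geomHalf)
      {ω | 2 * Real.logb 2 n <
        ((Finset.univ.filter
          (fun v : V => ω v + 1 = Finset.univ.sup (fun u : V => ω u + 1))).card : ℝ)}
      ≤ ENNReal.ofReal ((2 : ℝ) ^ (-(2 * Real.logb 2 n))) ∧
    ENNReal.ofReal ((2 : ℝ) ^ (-(2 * Real.logb 2 n))) = 1 / (n : ENNReal) ^ 2 :=
  max_level_set_small_general V n hn2
end

section
/- Suppose an integer d ≥ 1 and an integer j* ≥ 1 satisfy (1 − 2^{-j*+1})^d ≥ 0.2 and (1 − 2^{-j*})^d ≤ 0.8, and assume further that 2^{j*-1} ≥ 64. Then d/3.24 ≤ 2^{j*−1} ≤ d/0.22, i.e., 2^{j*−1} is a constant-factor approximation of d. -/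
/-- Deterministic core of the degree-approximation lemma.  If an
integer degree `d ≥ 1` and a level `j* ≥ 1` satisfy `(1 − 2^{-j*+1})^d ≥ 0.2` and
`(1 − 2^{-j*})^d ≤ 0.8`, and moreover `2^{j*-1} ≥ 64`, then
`d/3.24 ≤ 2^{j*-1} ≤ d/0.22`, i.e. `2^{j*-1}` is a constant-factor approximation of
`d`. -/
theorem degree_approx_constant_factor (d jstar : ℕ) (hd : 1 ≤ d) (hj : 1 ≤ jstar)
    (h64 : (64 : ℝ) ≤ (2 : ℝ) ^ ((jstar : ℝ) - 1))
    (hlow : (0.2 : ℝ) ≤ (1 - (2 : ℝ) ^ (-(jstar : ℝ) + 1)) ^ d)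
    (hhigh : (1 - (2 : ℝ) ^ (-(jstar : ℝ))) ^ d ≤ (0.8 : ℝ)) :
    (d : ℝ) / 3.24 ≤ (2 : ℝ) ^ ((jstar : ℝ) - 1) ∧
    (2 : ℝ) ^ ((jstar : ℝ) - 1) ≤ (d : ℝ) / 0.22 := by
  set x : ℝ := (2 : ℝ) ^ ((jstar : ℝ) - 1) with hx
  have hxpos : (0 : ℝ) < x := Real.rpow_pos_of_pos (by norm_num) _
  have hinv : (2 : ℝ) ^ (-(jstar : ℝ) + 1) = x⁻¹ := by
    rw [hx, ← Real.rpow_neg (by norm_num)]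
    ring_nf
  have hinv2 : (2 : ℝ) ^ (-(jstar : ℝ)) = x⁻¹ / 2 := by
    have h' : (2 : ℝ) ^ (-(jstar : ℝ) + 1) = (2 : ℝ) ^ (-(jstar : ℝ)) * 2 := by
      rw [Real.rpow_add (by norm_num), Real.rpow_one]
    rw [h'] at hinv
    linarith
  rw [hinv] at hlow
  rw [hinv2] at hhigh
  have hxinv_small : x⁻¹ ≤ 1 / 64 := by
    rw [inv_le_comm₀ (by positivity) (by norm_num)]
    linarith
  have hxinv_pos : 0 < x⁻¹ := by positivity
  constructor
  · -- lower bound: d/x ≤ 2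
    have h1 : (1 - x⁻¹) ^ d ≤ Real.exp (-x⁻¹) ^ d := by
      apply pow_le_pow_left₀ (by linarith)
      linarith [Real.add_one_le_exp (-x⁻¹)]
    have h2 : Real.exp (-x⁻¹) ^ d = Real.exp (d * -x⁻¹) := by
      rw [← Real.exp_nat_mul]
    have h3 : (0.2 : ℝ) ≤ Real.exp (d * -x⁻¹) := by
      rw [← h2]; exact le_trans hlow h1
    have h4 : (d : ℝ) * x⁻¹ ≤ 2 := by
      by_contra h
      push_neg at h
      have : Real.exp (d * -x⁻¹) < Real.exp (-2) := by
        apply Real.exp_lt_exp.mpr; linarith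
      have he : Real.exp (-2) < 0.2 := by
        rw [Real.exp_neg]
        rw [show ((2:ℝ) = (1:ℝ)+1) by norm_num, Real.exp_add]
        have := Real.exp_one_gt_d9
        have h5 : (5 : ℝ) < Real.exp 1 * Real.exp 1 := by nlinarith
        rw [inv_lt_comm₀ (by positivity) (by norm_num)]
        linarith
      linarith
    have : (d : ℝ) ≤ 2 * x := by
      have := mul_le_mul_of_nonneg_right h4 hxpos.le
      rw [mul_assoc, inv_mul_cancel₀ hxpos.ne', mul_one] at this
      linarith
    rw [div_le_iff₀ (by norm_num : (0:ℝ) < 3.24)]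
    linarith
  · -- upper bound via Bernoulli
    by_contra h
    push_neg at h
    have hdx : (d : ℝ) < 0.22 * x := by
      have := (div_lt_iff₀ (by norm_num : (0:ℝ) < 0.22)).mp h
      linarith
    have hbern : 1 + (d : ℝ) * (-(x⁻¹ / 2)) ≤ (1 + -(x⁻¹ / 2)) ^ d :=
      one_add_mul_le_pow (by linarith) d
    have hsmall : (d : ℝ) * (x⁻¹ / 2) < 0.11 := by
      have := mul_lt_mul_of_pos_right hdx (half_pos hxinv_pos)
      calc (d : ℝ) * (x⁻¹ / 2) < 0.22 * x * (x⁻¹ / 2) := this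
        _ = 0.11 * (x * x⁻¹) := by ring
        _ = 0.11 := by rw [mul_inv_cancel₀ hxpos.ne', mul_one]
    have : (0.89 : ℝ) < (1 - x⁻¹ / 2) ^ d := by
      have : 1 + (d : ℝ) * (-(x⁻¹ / 2)) > 0.89 := by nlinarith
      calc (0.89 : ℝ) < 1 + (d : ℝ) * (-(x⁻¹ / 2)) := this
        _ ≤ (1 + -(x⁻¹ / 2)) ^ d := hbern
        _ = (1 - x⁻¹ / 2) ^ d := by ring_nf
    linarith
end
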